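/- arXiv:0707.0502 — 5 statements merged into one kernel-verified Lean document; each statement's English description precedes it below -/
import Mathlib

section
/- Suppose AV_m = V_{m+1} H̄_m with V_{m+1} having orthonormal columns, and suppose the residual of the i-th shifted system is r_{0,i} = β_i V_{m+1} c for a scalar β_i and vector c ∈ ℂ^{m+1}. If d_i ∈ ℂ^m and scalar β_i^{new} satisfy (H̄_m − σ_i Ī) d_i = β_i c − β_i^{new} s, where s = c − (H̄_m − σ₁ Ī) d₁, then the updated residual r_i = β_i V_{m+1} c − (A − σ_i I) V_m d_i equals β_i^{new} r₁, where r₁ = V_{m+1} c − (A − σ₁ I) V_m d₁. In particular, the residuals of all shifted systems remain parallel to the base residual. -/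
open Matrix

/-- In shifted restarted GMRES, if the correction `dᵢ` satisfies
`(H̄ₘ − σᵢ Ī) dᵢ = βᵢ c − βᵢⁿᵉʷ s` with `s = c − (H̄ₘ − σ₁ Ī) d₁`, then the updated
residual of the i-th shifted system equals `βᵢⁿᵉʷ r₁`: all residuals stay parallel. -/
theorem shifted_gmres_parallel_residuals {n m : ℕ}
    (A : Matrix (Fin n) (Fin n) ℂ)
    (V : Matrix (Fin n) (Fin (m + 1)) ℂ)
    (H : Matrix (Fin (m + 1)) (Fin m) ℂ)
    (Vm : Matrix (Fin n) (Fin m) ℂ)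
    (hVm : Vm = V.submatrix id Fin.castSucc)
    (Ibar : Matrix (Fin (m + 1)) (Fin m) ℂ)
    (hIbar : Ibar = Matrix.of fun (p : Fin (m + 1)) (q : Fin m) =>
      if (p : ℕ) = (q : ℕ) then (1 : ℂ) else 0)
    (hArnoldi : A * Vm = V * H)
    (hindep : LinearIndependent ℂ (fun j => fun i => V i j))
    (σ₁ σi βi βnew : ℂ) (c s d₁ di : _)
    (hs : s = c - (H - σ₁ • Ibar) *ᵥ d₁)
    (hdi : (H - σi • Ibar) *ᵥ di = βi • c - βnew • s)
    (r₁ ri : Fin n → ℂ)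
    (hr₁ : r₁ = V *ᵥ c - ((A - σ₁ • 1) * Vm) *ᵥ d₁)
    (hri : ri = βi • (V *ᵥ c) - ((A - σi • 1) * Vm) *ᵥ di) :
    ri = βnew • r₁ := by
  -- Key fact: V * Ibar = Vm
  have hVI : V * Ibar = Vm := by
    subst hIbar hVm
    ext i q
    simp only [Matrix.mul_apply, Matrix.of_apply, Matrix.submatrix_apply, id]
    rw [Finset.sum_eq_single (Fin.castSucc q)]
    · simp
    · intro p _ hp
      have : (p : ℕ) ≠ (q : ℕ) := by
        intro h
        apply hp
        ext
        simpa using h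
      simp [this]
    · simp
  -- (A - σ•1) * Vm = V * (H - σ•Ibar)
  have key : ∀ σ : ℂ, (A - σ • 1) * Vm = V * (H - σ • Ibar) := by
    intro σ
    rw [Matrix.sub_mul, Matrix.mul_sub, hArnoldi, Matrix.smul_mul, Matrix.one_mul,
      Matrix.mul_smul, hVI]
  have hfact : ∀ (σ : ℂ) (d : Fin m → ℂ),
      ((A - σ • 1) * Vm) *ᵥ d = V *ᵥ ((H - σ • Ibar) *ᵥ d) := by
    intro σ d
    rw [key σ, Matrix.mulVec_mulVec]
  rw [hri, hfact, hdi, hr₁, hfact, hs]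
  simp only [Matrix.mulVec_sub, Matrix.mulVec_smul, smul_sub, sub_sub_cancel]
end

section
/- Let H̄ be an (m+1)×m matrix and suppose H̄ − σĪ = QR is a QR factorization with Q an (m+1)×(m+1) unitary matrix and R an (m+1)×m upper triangular matrix whose top m×m block is invertible (last row of R is zero). Then for any vectors c, s ∈ ℂ^{m+1} with (Q* s)_{m+1} ≠ 0 and any scalar β, there exist a unique scalar β^{new} and unique vector d ∈ ℂ^m such that (H̄ − σĪ) d = β c − β^{new} s; moreover β^{new} = β (Q* c)_{m+1} / (Q* s)_{m+1}. -/
open Matrix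

/-- Via the QR factorization `H̄ − σĪ = QR`, the shifted GMRES update equations
`(H̄ − σĪ) d = β c − βⁿᵉʷ s` have a unique solution `(βⁿᵉʷ, d)`, and
`βⁿᵉʷ = β (Q*c)_{m+1} / (Q*s)_{m+1}`. -/
theorem shifted_gmres_qr_unique_solution {m : ℕ}
    (H : Matrix (Fin (m + 1)) (Fin m) ℂ)
    (Ibar : Matrix (Fin (m + 1)) (Fin m) ℂ)
    (hIbar : Ibar = Matrix.of fun (p : Fin (m + 1)) (q : Fin m) =>
      if (p : ℕ) = (q : ℕ) then (1 : ℂ) else 0)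
    (σ : ℂ)
    (Q : Matrix (Fin (m + 1)) (Fin (m + 1)) ℂ)
    (R : Matrix (Fin (m + 1)) (Fin m) ℂ)
    (hQ : Qᴴ * Q = 1)
    (hR : ∀ (p : Fin (m + 1)) (q : Fin m), (q : ℕ) < (p : ℕ) → R p q = 0)
    (hRtop : IsUnit (R.submatrix (Fin.castSucc) id).det)
    (hQR : H - σ • Ibar = Q * R)
    (c s : Fin (m + 1) → ℂ)
    (hs : (Qᴴ *ᵥ s) (Fin.last m) ≠ 0)
    (β : ℂ) :
    (∃! p : ℂ × (Fin m → ℂ),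
        (H - σ • Ibar) *ᵥ p.2 = β • c - p.1 • s) ∧
      ∀ (βnew : ℂ) (d : Fin m → ℂ),
        (H - σ • Ibar) *ᵥ d = β • c - βnew • s →
          βnew = β * (Qᴴ *ᵥ c) (Fin.last m) / (Qᴴ *ᵥ s) (Fin.last m) := by
  have hQ' : Q * Qᴴ = 1 := mul_eq_one_comm.mp hQ
  set R0 := R.submatrix Fin.castSucc id with hR0def
  have hlast : ∀ d : Fin m → ℂ, (R *ᵥ d) (Fin.last m) = 0 := by
    intro d
    simp only [mulVec, dotProduct]
    apply Finset.sum_eq_zero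
    intro q _
    rw [hR _ q (by simpa using q.isLt), zero_mul]
  have hcast : ∀ (d : Fin m → ℂ) (i : Fin m),
      (R *ᵥ d) (Fin.castSucc i) = (R0 *ᵥ d) i := by
    intro d i
    simp [mulVec, dotProduct, R0, Matrix.submatrix]
  have hequiv : ∀ (bn : ℂ) (d : Fin m → ℂ),
      (H - σ • Ibar) *ᵥ d = β • c - bn • s ↔
      R *ᵥ d = Qᴴ *ᵥ (β • c - bn • s) := by
    intro bn d
    rw [hQR]
    constructor
    · intro h
      have h2 := congrArg (fun w => Qᴴ *ᵥ w) h
      simp only [mulVec_mulVec, ← Matrix.mul_assoc, hQ, Matrix.one_mul] at h2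
      exact h2
    · intro h
      calc (Q * R) *ᵥ d = Q *ᵥ (R *ᵥ d) := by rw [← mulVec_mulVec]
        _ = Q *ᵥ (Qᴴ *ᵥ (β • c - bn • s)) := by rw [h]
        _ = β • c - bn • s := by rw [mulVec_mulVec, hQ', one_mulVec]
  -- the βnew formula
  have hform : ∀ (bn : ℂ) (d : Fin m → ℂ),
      (H - σ • Ibar) *ᵥ d = β • c - bn • s →
      bn = β * (Qᴴ *ᵥ c) (Fin.last m) / (Qᴴ *ᵥ s) (Fin.last m) := by
    intro bn d h
    have h2 := (hequiv bn d).mp h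
    have h3 := congrFun h2 (Fin.last m)
    rw [hlast] at h3
    rw [Matrix.mulVec_sub, Matrix.mulVec_smul, Matrix.mulVec_smul] at h3
    simp only [Pi.sub_apply, Pi.smul_apply, smul_eq_mul] at h3
    rw [eq_div_iff hs]
    linear_combination h3
  set bn := β * (Qᴴ *ᵥ c) (Fin.last m) / (Qᴴ *ᵥ s) (Fin.last m) with hbn
  set v := Qᴴ *ᵥ (β • c - bn • s) with hv
  have hvlast : v (Fin.last m) = 0 := by
    rw [hv, Matrix.mulVec_sub, Matrix.mulVec_smul, Matrix.mulVec_smul]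
    simp only [Pi.sub_apply, Pi.smul_apply, smul_eq_mul]
    rw [hbn]
    field_simp
    ring
  have hR0unit : IsUnit R0 := (Matrix.isUnit_iff_isUnit_det R0).mpr hRtop
  set d := R0⁻¹ *ᵥ (fun i => v (Fin.castSucc i)) with hd
  have hRd : R *ᵥ d = v := by
    funext p
    refine Fin.lastCases ?_ ?_ p
    · rw [hlast, hvlast]
    · intro i
      rw [hcast, hd, mulVec_mulVec, Matrix.mul_nonsing_inv R0 hRtop, one_mulVec]
  have hsol : (H - σ • Ibar) *ᵥ d = β • c - bn • s := (hequiv bn d).mpr hRd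
  refine ⟨⟨(bn, d), hsol, ?_⟩, hform⟩
  intro p hp
  have hp1 : p.1 = bn := hform p.1 p.2 hp
  rw [hp1] at hp
  have h2 := (hequiv bn p.2).mp hp
  have h3 : R0 *ᵥ p.2 = R0 *ᵥ d := by
    funext i
    rw [← hcast, ← hcast, h2, hRd]
  have hp2 : p.2 = d := by
    have h4 := congrArg (fun w => R0⁻¹ *ᵥ w) h3
    simpa [mulVec_mulVec, Matrix.nonsing_inv_mul R0 hRtop] using h4
  exact Prod.ext hp1 hp2
end

section
/- (Theorem 1 of the paper.) Let z₁,…,z_k be linearly independent eigenvectors of A with eigenvalues λ₁,…,λ_k, and let Z_k be the n×k matrix with columns z₁,…,z_k. Suppose for each shift σ_i (with σ_i not equal to any λ_j) the residuals before projection satisfy r_{0,i} = β_i r_{0,1}. Define the Galerkin projection updates d_i = β_i (Λ_k − σ_i I_k)^{-1}(Z_kᵀ Z_k)^{-1} Z_kᵀ r_{0,1}, where Λ_k = diag(λ₁,…,λ_k). Then the post-projection residuals r_i = r_{0,i} − (A − σ_i I) Z_k d_i satisfy r_i = β_i (I − Z_k (Z_kᵀ Z_k)^{-1} Z_kᵀ)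 r_{0,1}; in particular, all the r_i are scalar multiples of a common vector (they remain parallel). -/
open Matrix

/-- Theorem 1 of the paper: after the Galerkin (= minres for exact eigenvectors)
projection over exact eigenvectors, the residuals of all shifted systems are
parallel: `rᵢ = βᵢ (I − Z(Z*Z)⁻¹Z*) r₀₁`. -/
theorem minres_projection_exact_eigenvectors_parallel {n k ns : ℕ}
    (A : Matrix (Fin n) (Fin n) ℂ)
    (Z : Matrix (Fin n) (Fin k) ℂ)
    (lam : Fin k → ℂ)
    (heig : A * Z = Z * Matrix.diagonal lam)
    (hindep : IsUnit (Zᴴ * Z).det)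
    (σ : Fin ns → ℂ)
    (hσ : ∀ i j, σ i ≠ lam j)
    (β : Fin ns → ℂ)
    (r01 : Fin n → ℂ)
    (r0 : Fin ns → (Fin n → ℂ))
    (hr0 : ∀ i, r0 i = β i • r01)
    (d : Fin ns → (Fin k → ℂ))
    (hd : ∀ i, d i =
      β i • ((Matrix.diagonal lam - σ i • 1)⁻¹ *ᵥ ((Zᴴ * Z)⁻¹ *ᵥ (Zᴴ *ᵥ r01))))
    (r : Fin ns → (Fin n → ℂ))
    (hr : ∀ i, r i = r0 i - ((A - σ i • 1) * Z) *ᵥ d i) :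
    ∀ i, r i = β i • ((1 - Z * (Zᴴ * Z)⁻¹ * Zᴴ) *ᵥ r01) := by
  intro i
  set D : Matrix (Fin k) (Fin k) ℂ := Matrix.diagonal lam - σ i • 1 with hD
  have hDdiag : D = Matrix.diagonal (fun j => lam j - σ i) := by
    ext a b
    by_cases h : a = b <;>
      simp [hD, Matrix.diagonal, Matrix.one_apply, h]
  have hUnit : IsUnit D.det := by
    rw [hDdiag, Matrix.det_diagonal]
    exact isUnit_iff_ne_zero.mpr (Finset.prod_ne_zero_iff.mpr fun j _ =>
      sub_ne_zero.mpr fun h => hσ i j h.symm)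
  have hDinv : D * D⁻¹ = 1 := Matrix.mul_nonsing_inv D hUnit
  have hcomm : (A - σ i • 1) * Z = Z * D := by
    simp [hD, Matrix.sub_mul, Matrix.mul_sub, heig, Matrix.smul_mul, Matrix.mul_smul]
  rw [hr, hr0, hd, hcomm]
  rw [Matrix.mulVec_smul]
  rw [Matrix.mulVec_mulVec, Matrix.mul_assoc, hDinv, Matrix.mul_one]
  rw [Matrix.sub_mulVec, Matrix.one_mulVec, smul_sub, Matrix.mulVec_mulVec,
    Matrix.mulVec_mulVec, Matrix.mul_assoc]
end

section
/- Suppose AV_k = V_{k+1} H̄_k with V_{k+1} having linearly independent columns, and suppose the i-th shifted residual satisfies r_{0,i} = β_i r_{0,1}. Let d₁ ∈ ℂ^k give the base-shift projected residual r₁ = r_{0,1} − (A − σ₁ I) V_k d₁. If d_i ∈ ℂ^k solves the first k rows of the system (H̄_k − σ_i Ī) d_i = β_i (H̄_k − σ₁ Ī) d₁, then there exists a scalar γ_i such that the i-th projected residual satisfies r_{0,i} − (A − σ_i I) V_k d_i = β_i r₁ + γ_i v_{k+1}, where v_{k+1} is the last column of V_{k+1}. That is, after the eigenvector projection, each shifted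 residual is parallel to the base residual except for a component in the direction v_{k+1}. -/
open Matrix

/-!
Write `Vₖ = V_{k+1} Ī`. The Arnoldi relation then shifts to `(A − σI) Vₖ = V_{k+1} (H̄ₖ − σĪ)` for
every `σ`, so the difference between the `i`-th projected residual and `βᵢ r₁` is `V_{k+1} w` with
`w = βᵢ (H̄ₖ − σ₁Ī) d₁ − (H̄ₖ − σᵢĪ) dᵢ`. The equations solved by `dᵢ` say precisely that the first
`k` entries of `w` vanish, so `V_{k+1} w` is a multiple of the last column `v_{k+1}`.
-/

namespace Matrix

variable {R : Type*} {m : Type*} {k : ℕ}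

theorem of_val_eq_val_eq_submatrix_one [Zero R] [One R] :
    (Matrix.of fun (p : Fin (k + 1)) (q : Fin k) => if (p : ℕ) = (q : ℕ) then (1 : R) else 0) =
      (1 : Matrix (Fin (k + 1)) (Fin (k + 1)) R).submatrix id Fin.castSucc := by
  ext p q
  simp [one_apply, Fin.ext_iff]

theorem sub_smul_one_mul_eq_mul_sub_smul [CommRing R] [Fintype m] [DecidableEq m]
    {l o : Type*} [Fintype o]
    {A : Matrix m m R} {W : Matrix m l R} {V : Matrix m o R} {H I : Matrix o l R}
    (hA : A * W = V * H) (hI : V * I = W) (σ : R) :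
    (A - σ • 1) * W = V * (H - σ • I) := by
  rw [Matrix.sub_mul, hA, Matrix.mul_sub, Matrix.smul_mul, Matrix.one_mul, Matrix.mul_smul, hI]

theorem mulVec_eq_smul_col_last [CommSemiring R] (V : Matrix m (Fin (k + 1)) R)
    {w : Fin (k + 1) → R} (hw : ∀ p : Fin k, w p.castSucc = 0) :
    V *ᵥ w = w (Fin.last k) • V.col (Fin.last k) := by
  ext i
  simp [mulVec, dotProduct, Fin.sum_univ_castSucc, hw, mul_comm]

end Matrix

theorem eigenvector_projection_residual_direction_general {n k : ℕ}
    (A : Matrix (Fin n) (Fin n) ℂ)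
    (V : Matrix (Fin n) (Fin (k + 1)) ℂ)
    (Vk : Matrix (Fin n) (Fin k) ℂ)
    (hVk : Vk = V.submatrix id Fin.castSucc)
    (vlast : Fin n → ℂ)
    (hvlast : vlast = fun i => V i (Fin.last k))
    (H : Matrix (Fin (k + 1)) (Fin k) ℂ)
    (hArnoldi : A * Vk = V * H)
    (Ibar : Matrix (Fin (k + 1)) (Fin k) ℂ)
    (hIbar : Ibar = Matrix.of fun (p : Fin (k + 1)) (q : Fin k) =>
      if (p : ℕ) = (q : ℕ) then (1 : ℂ) else 0)
    (σ₁ σi βi : ℂ)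
    (r01 r0i : Fin n → ℂ)
    (hr0i : r0i = βi • r01)
    (d₁ di : Fin k → ℂ)
    (hdi : ∀ p : Fin k,
      ((H - σi • Ibar) *ᵥ di) (Fin.castSucc p) =
        βi * (((H - σ₁ • Ibar) *ᵥ d₁) (Fin.castSucc p)))
    (r₁ : Fin n → ℂ)
    (hr₁ : r₁ = r01 - ((A - σ₁ • 1) * Vk) *ᵥ d₁) :
    ∃ γi : ℂ, r0i - ((A - σi • 1) * Vk) *ᵥ di = βi • r₁ + γi • vlast := by
  have hVI : V * Ibar = Vk := by
    rw [hIbar, of_val_eq_val_eq_submatrix_one, hVk]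
    exact mul_submatrix_one (Equiv.refl _) Fin.castSucc V
  set w := βi • ((H - σ₁ • Ibar) *ᵥ d₁) - (H - σi • Ibar) *ᵥ di
  have hw : V *ᵥ w = w (Fin.last k) • vlast := by
    rw [mulVec_eq_smul_col_last V fun p => by simp [w, hdi p], hvlast]
    rfl
  refine ⟨w (Fin.last k), ?_⟩
  rw [hr0i, hr₁, ← hw, sub_smul_one_mul_eq_mul_sub_smul hArnoldi hVI,
    sub_smul_one_mul_eq_mul_sub_smul hArnoldi hVI, ← mulVec_mulVec, ← mulVec_mulVec,
    mulVec_sub, mulVec_smul, smul_sub]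
  abel

/-- After the projection over approximate eigenvectors, each shifted residual is
parallel to the base residual except for a component in the direction of the extra
vector `v_{k+1}`: if `dᵢ` solves the first `k` rows of `(H̄ₖ − σᵢĪ) dᵢ = βᵢ (H̄ₖ − σ₁Ī) d₁`,
then `r₀ᵢ − (A − σᵢI) Vₖ dᵢ = βᵢ r₁ + γᵢ v_{k+1}` for some scalar `γᵢ`. -/
theorem eigenvector_projection_residual_direction {n k : ℕ}
    (A : Matrix (Fin n) (Fin n) ℂ)
    (V : Matrix (Fin n) (Fin (k + 1)) ℂ)
    (hindep : LinearIndependent ℂ (fun j => fun i => V i j))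
    (Vk : Matrix (Fin n) (Fin k) ℂ)
    (hVk : Vk = V.submatrix id Fin.castSucc)
    (vlast : Fin n → ℂ)
    (hvlast : vlast = fun i => V i (Fin.last k))
    (H : Matrix (Fin (k + 1)) (Fin k) ℂ)
    (hArnoldi : A * Vk = V * H)
    (Ibar : Matrix (Fin (k + 1)) (Fin k) ℂ)
    (hIbar : Ibar = Matrix.of fun (p : Fin (k + 1)) (q : Fin k) =>
      if (p : ℕ) = (q : ℕ) then (1 : ℂ) else 0)
    (hHk : IsUnit (H.submatrix (Fin.castSucc) id).det)
    (σ₁ σi βi : ℂ)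
    (r01 r0i : Fin n → ℂ)
    (hr0i : r0i = βi • r01)
    (d₁ di : Fin k → ℂ)
    (hdi : ∀ p : Fin k,
      ((H - σi • Ibar) *ᵥ di) (Fin.castSucc p) =
        βi * (((H - σ₁ • Ibar) *ᵥ d₁) (Fin.castSucc p)))
    (r₁ : Fin n → ℂ)
    (hr₁ : r₁ = r01 - ((A - σ₁ • 1) * Vk) *ᵥ d₁) :
    ∃ γi : ℂ, r0i - ((A - σi • 1) * Vk) *ᵥ di = βi • r₁ + γi • vlast :=
  eigenvector_projection_residual_direction_general A V Vk hVk vlast hvlast H hArnoldi Ibar hIbar σ₁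
    σi βi r01 r0i hr0i d₁ di hdi r₁ hr₁
end

section
/- Projection over previous solutions yields shift-independent residuals: suppose for each shift σ_i the matrix X_i ∈ ℂ^{n×(j−1)} of previous solutions satisfies (A − σ_i I) X_i = B, where B is a fixed n×(j−1) matrix of previous right-hand sides with linearly independent columns. Then the minimum-residual (normal-equations) projection for a new right-hand side bʲ, i.e. the solution d of X_i* (A − σ_i I)* (A − σ_i I) X_i d = X_i* (A − σ_i I)* bʲ, reduces to B* B d = B* bʲ; hence d is independent of the shift i, the resulting residuals r_i = bʲ − (A − σ_i I) X_i d = bʲ − B d are identical for all shifts, and the approximate solutions are x̃_iʲ = X_i d. -/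
open Matrix

/-- Projection over previous solutions yields shift-independent residuals: when
`(A − σᵢI) Xᵢ = B` for every shift, the minres normal equations for a new right-hand
side `bʲ` reduce to `B*B d = B*bʲ` (independent of the shift), and the residuals
`bʲ − (A − σᵢI) Xᵢ d = bʲ − B d` coincide for all shifts, with approximate solutions
`Xᵢ d`. -/
theorem related_rhs_projection_shift_independent {n j ns : ℕ}
    (A : Matrix (Fin n) (Fin n) ℂ)
    (σ : Fin ns → ℂ)
    (X : Fin ns → Matrix (Fin n) (Fin j) ℂ)
    (B : Matrix (Fin n) (Fin j) ℂ)
    (hindep : IsUnit (Bᴴ * B).det)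
    (hX : ∀ i, (A - σ i • 1) * X i = B)
    (bj : Fin n → ℂ) :
    ∀ i (d : Fin j → ℂ),
      (((X i)ᴴ * (A - σ i • 1)ᴴ * ((A - σ i • 1) * X i)) *ᵥ d =
          ((X i)ᴴ * (A - σ i • 1)ᴴ) *ᵥ bj ↔
        (Bᴴ * B) *ᵥ d = Bᴴ *ᵥ bj) ∧
      bj - ((A - σ i • 1) * X i) *ᵥ d = bj - B *ᵥ d := by
  intro i d
  rw [← conjTranspose_mul, hX i]
  exact ⟨Iff.rfl, rfl⟩
end
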